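/- arXiv:1609.09815 — 3 statements merged into one kernel-verified Lean document; each statement's English description precedes it below -/
import Mathlib

section
/- On the space of N×N complex matrices, define the ternary bracket [a, b, c] := tr(a)⁅b, c⁆ + tr(b)⁅c, a⁆ + tr(c)⁅a, b⁆, where ⁅x, y⁆ = xy − yx. Then this bracket is totally antisymmetric and satisfies the fundamental identity [a,b,[c,d,e]] = [[a,b,c],d,e] + [c,[a,b,d],e] + [c,d,[a,b,e]] for all N×N complex matrices a, b, c, d, e; hence (gl(N,ℂ), [·,·,·]) is a 3-Lie algebra. -/
lemma trace_commutator {N : ℕ} (x y : Matrix (Fin N) (Fin N) ℂ) :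
    Matrix.trace ⁅x, y⁆ = 0 := by
  simp [Ring.lie_def, Matrix.trace_sub, Matrix.trace_mul_comm x y]


/-- The ternary bracket `[a,b,c] = tr(a)⁅b,c⁆ + tr(b)⁅c,a⁆ + tr(c)⁅a,b⁆` on `gl(N, ℂ)`,
where `⁅x,y⁆ = xy − yx`. -/
noncomputable def glThreeBracket (N : ℕ) (a b c : Matrix (Fin N) (Fin N) ℂ) :
    Matrix (Fin N) (Fin N) ℂ :=
  a.trace • ⁅b, c⁆ + b.trace • ⁅c, a⁆ + c.trace • ⁅a, b⁆

/-- The ternary bracket `[a,b,c] = tr(a)⁅b,c⁆ + tr(b)⁅c,a⁆ + tr(c)⁅a,b⁆` on the space of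
`N×N` complex matrices is totally antisymmetric and satisfies the fundamental identity,
making `gl(N,ℂ)` a 3-Lie algebra. -/
theorem glThreeBracket_threeLie (N : ℕ) :
    (∀ a b c : Matrix (Fin N) (Fin N) ℂ,
      glThreeBracket N a b c = - glThreeBracket N b a c) ∧
    (∀ a b c : Matrix (Fin N) (Fin N) ℂ,
      glThreeBracket N a b c = - glThreeBracket N a c b) ∧
    (∀ a b c d e : Matrix (Fin N) (Fin N) ℂ,
      glThreeBracket N a b (glThreeBracket N c d e)
        = glThreeBracket N (glThreeBracket N a b c) d e
          + glThreeBracket N c (glThreeBracket N a b d) e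
          + glThreeBracket N c d (glThreeBracket N a b e)) := by
  refine ⟨fun a b c => ?_, fun a b c => ?_, fun a b c d e => ?_⟩
  · simp only [glThreeBracket, Ring.lie_def]; module
  · simp only [glThreeBracket, Ring.lie_def]; module
  · simp only [glThreeBracket, Matrix.trace_add, Matrix.trace_smul, trace_commutator,
      smul_zero, add_zero, zero_add, smul_eq_mul, mul_zero, zero_smul]
    simp only [Ring.lie_def, smul_add, smul_sub, mul_add, add_mul, mul_sub, sub_mul,
      smul_smul, mul_smul_comm, smul_mul_assoc, mul_assoc]
    module
end

section
/- On the space of N×N complex matrices, define the bilinear bracket b(x, y) := tr(x) y − tr(y) x + ⁅x, y⁆, where ⁅x, y⁆ = xy − yx. Then for all N×N complex matrices x, y, z the Jacobiator of b equals the ternary bracket: b(b(x,y), z) + b(b(y,z), x) + b(b(z,x), y) = tr(x)⁅y, z⁆ + tr(y)⁅z, x⁆ + tr(z)⁅x, y⁆. -/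
/-- The bilinear bracket `b(x,y) = tr(x) y − tr(y) x + ⁅x,y⁆` on `gl(N, ℂ)`,
where `⁅x,y⁆ = xy − yx`. -/
noncomputable def glTwoBracket (N : ℕ) (x y : Matrix (Fin N) (Fin N) ℂ) :
    Matrix (Fin N) (Fin N) ℂ :=
  x.trace • y - y.trace • x + ⁅x, y⁆

/-- On `N×N` complex matrices, the Jacobiator of the bracket
`b(x,y) = tr(x) y − tr(y) x + ⁅x,y⁆` equals the ternary bracket
`tr(x)⁅y,z⁆ + tr(y)⁅z,x⁆ + tr(z)⁅x,y⁆`. -/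
theorem glTwoBracket_jacobiator (N : ℕ) (x y z : Matrix (Fin N) (Fin N) ℂ) :
    glTwoBracket N (glTwoBracket N x y) z + glTwoBracket N (glTwoBracket N y z) x
        + glTwoBracket N (glTwoBracket N z x) y
      = x.trace • ⁅y, z⁆ + y.trace • ⁅z, x⁆ + z.trace • ⁅x, y⁆ := by
  simp only [glTwoBracket, Ring.lie_def, Matrix.trace_add, Matrix.trace_sub,
    Matrix.trace_smul, Matrix.trace_mul_comm y x, Matrix.trace_mul_comm z x,
    Matrix.trace_mul_comm z y, smul_sub, smul_add, smul_smul, sub_mul, mul_sub,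
    add_mul, mul_add, smul_mul_assoc, mul_smul_comm, smul_eq_mul,
    mul_comm y.trace x.trace, mul_comm z.trace x.trace, mul_comm z.trace y.trace,
    mul_assoc]
  abel_nf
  simp
end

section
/- With the data of a metric Lie algebra 𝔤, an orthogonal 𝔤-module (V, ρ, (·,·)), and a bilinear map D : V × V → 𝔤 satisfying ⟪D(a,b), x⟫ = (ρ(x)a, b) for all x ∈ 𝔤 and a, b ∈ V, the ternary bracket [a, b, c] := ρ(D(a,b)) c on V is antisymmetric in its first two arguments and satisfies the fundamental identity [a,b,[c,d,e]] = [[a,b,c],d,e] + [c,[a,b,d],e] + [c,d,[a,b,e]] for all a, b, c, d, e ∈ V. -/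
attribute [local instance 100] LieRing.ofAssociativeRing

/-!
`D : V × V → 𝔤` is the moment map of the orthogonal representation `ρ`. Invariance of `κ` and of
`(·,·)` make it `𝔤`-equivariant, `⁅x, D(c,d)⁆ = D(ρ(x)c, d) + D(c, ρ(x)d)`, and make `D` antisymmetric;
both are checked by pairing with an arbitrary `y` under the nondegenerate form `κ`.
Applying `ρ` to equivariance with `x = D(a,b)` is exactly the fundamental identity, since `ρ`
turns brackets into commutators.
-/

section

variable {R g V : Type*} [CommRing R] [LieRing g] [LieAlgebra R g]
  [AddCommGroup V] [Module R V]

lemma LinearMap.SeparatingLeft.eq_of_forall_apply_eq {κ : g →ₗ[R] g →ₗ[R] R}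
    (hκ : κ.SeparatingLeft) {u v : g} (h : ∀ y, κ u y = κ v y) : u = v :=
  LinearMap.ker_eq_bot.mp (LinearMap.separatingLeft_iff_ker_eq_bot.mp hκ) (LinearMap.ext h)

lemma LieHom.map_lie_apply_eq_sub (ρ : g →ₗ⁅R⁆ Module.End R V) (x y : g) (v : V) :
    ρ ⁅x, y⁆ v = ρ x (ρ y v) - ρ y (ρ x v) := by
  rw [LieHom.map_lie, Ring.lie_def, LinearMap.sub_apply, Module.End.mul_apply,
    Module.End.mul_apply]

lemma moment_map_swap {κ : g →ₗ[R] g →ₗ[R] R} (hκ : κ.SeparatingLeft)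
    {ρ : g →ₗ⁅R⁆ Module.End R V} {Bf : V →ₗ[R] V →ₗ[R] R}
    (hBsymm : ∀ a b, Bf a b = Bf b a) (hBinv : ∀ x a b, Bf (ρ x a) b + Bf a (ρ x b) = 0)
    {D : V →ₗ[R] V →ₗ[R] g} (hD : ∀ a b x, κ (D a b) x = Bf (ρ x a) b) (a b : V) :
    D a b = -D b a := by
  refine hκ.eq_of_forall_apply_eq fun x => ?_
  rw [map_neg, LinearMap.neg_apply, hD, hD, hBsymm (ρ x b), eq_neg_iff_add_eq_zero, hBinv]

lemma lie_moment_map {κ : g →ₗ[R] g →ₗ[R] R} (hκ : κ.SeparatingLeft)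
    (hκinv : ∀ x y z : g, κ ⁅x, y⁆ z + κ y ⁅x, z⁆ = 0)
    {ρ : g →ₗ⁅R⁆ Module.End R V} {Bf : V →ₗ[R] V →ₗ[R] R}
    (hBinv : ∀ x a b, Bf (ρ x a) b + Bf a (ρ x b) = 0)
    {D : V →ₗ[R] V →ₗ[R] g} (hD : ∀ a b x, κ (D a b) x = Bf (ρ x a) b) (x : g) (c d : V) :
    ⁅x, D c d⁆ = D (ρ x c) d + D c (ρ x d) := by
  refine hκ.eq_of_forall_apply_eq fun y => ?_
  calc κ ⁅x, D c d⁆ y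
      = -Bf (ρ ⁅x, y⁆ c) d := by rw [← hD, eq_neg_iff_add_eq_zero, hκinv]
    _ = -Bf (ρ x (ρ y c)) d + Bf (ρ y (ρ x c)) d := by
        rw [LieHom.map_lie_apply_eq_sub, map_sub, LinearMap.sub_apply]; ring
    _ = Bf (ρ y c) (ρ x d) + Bf (ρ y (ρ x c)) d := by
        rw [neg_eq_iff_add_eq_zero.mpr (hBinv x (ρ y c) d)]
    _ = κ (D (ρ x c) d + D c (ρ x d)) y := by
        rw [map_add, LinearMap.add_apply, hD, hD, add_comm]

end

theorem generalizedMetric3Lie_of_lie2_general {g V : Type*} [LieRing g] [LieAlgebra ℝ g]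
    [AddCommGroup V] [Module ℝ V]
    (κ : g →ₗ[ℝ] g →ₗ[ℝ] ℝ)
    (hκnondeg : ∀ x, (∀ y, κ x y = 0) → x = 0)
    (hκinv : ∀ x y z : g, κ ⁅x, y⁆ z + κ y ⁅x, z⁆ = 0)
    (ρ : g →ₗ⁅ℝ⁆ Module.End ℝ V)
    (Bf : V →ₗ[ℝ] V →ₗ[ℝ] ℝ)
    (hBsymm : ∀ a b, Bf a b = Bf b a)
    (hBinv : ∀ x a b, Bf (ρ x a) b + Bf a (ρ x b) = 0)
    (D : V →ₗ[ℝ] V →ₗ[ℝ] g)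
    (hD : ∀ a b x, κ (D a b) x = Bf (ρ x a) b) :
    (∀ a b c : V, ρ (D a b) c = - ρ (D b a) c) ∧
    (∀ a b c d e : V,
      ρ (D a b) (ρ (D c d) e)
        = ρ (D (ρ (D a b) c) d) e + ρ (D c (ρ (D a b) d)) e
          + ρ (D c d) (ρ (D a b) e)) := by
  refine ⟨fun a b c => ?_, fun a b c d e => ?_⟩
  · rw [moment_map_swap hκnondeg hBsymm hBinv hD a b, map_neg, LinearMap.neg_apply]
  · have h := LieHom.map_lie_apply_eq_sub ρ (D a b) (D c d) e
    rw [lie_moment_map hκnondeg hκinv hBinv hD, map_add, LinearMap.add_apply] at h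
    rw [h, sub_add_cancel]

/-- Given a metric Lie algebra `g` (with invariant nondegenerate symmetric form `κ`),
an orthogonal `g`-module `(V, ρ, Bf)` and a bilinear map `D : V × V → g` satisfying
`⟪D(a,b), x⟫ = (ρ(x)a, b)`, the ternary bracket `[a,b,c] := ρ(D(a,b)) c` on `V` is
antisymmetric in its first two arguments and satisfies the fundamental identity
`[a,b,[c,d,e]] = [[a,b,c],d,e] + [c,[a,b,d],e] + [c,d,[a,b,e]]`. -/
theorem generalizedMetric3Lie_of_lie2 {g V : Type*} [LieRing g] [LieAlgebra ℝ g]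
    [AddCommGroup V] [Module ℝ V]
    (κ : g →ₗ[ℝ] g →ₗ[ℝ] ℝ)
    (hκsymm : ∀ x y, κ x y = κ y x)
    (hκnondeg : ∀ x, (∀ y, κ x y = 0) → x = 0)
    (hκinv : ∀ x y z : g, κ ⁅x, y⁆ z + κ y ⁅x, z⁆ = 0)
    (ρ : g →ₗ⁅ℝ⁆ Module.End ℝ V)
    (Bf : V →ₗ[ℝ] V →ₗ[ℝ] ℝ)
    (hBsymm : ∀ a b, Bf a b = Bf b a)
    (hBinv : ∀ x a b, Bf (ρ x a) b + Bf a (ρ x b) = 0)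
    (D : V →ₗ[ℝ] V →ₗ[ℝ] g)
    (hD : ∀ a b x, κ (D a b) x = Bf (ρ x a) b) :
    (∀ a b c : V, ρ (D a b) c = - ρ (D b a) c) ∧
    (∀ a b c d e : V,
      ρ (D a b) (ρ (D c d) e)
        = ρ (D (ρ (D a b) c) d) e + ρ (D c (ρ (D a b) d)) e
          + ρ (D c d) (ρ (D a b) e)) :=
  generalizedMetric3Lie_of_lie2_general κ hκnondeg hκinv ρ Bf hBsymm hBinv D hD
end
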